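/- arXiv:2001.09320 — 3 statements merged into one kernel-verified Lean document; each statement's English description precedes it below -/
import Mathlib

section
/- Let A be a compact subset of a Banach space X which is convex, symmetric (A = −A), and contains 0, and suppose that A can be covered by two balls of radius ε whose centers belong to A. Then every f ∈ A satisfies ‖f‖_X ≤ 4ε. -/
/-- if a compact, convex, symmetric subset `A` of a Banach space `X`
containing `0` is covered by two balls of radius `ε` with centers in `A`, then every
`f ∈ A` satisfies `‖f‖ ≤ 4ε`. -/
theorem statement3 {X : Type*} [NormedAddCommGroup X] [NormedSpace ℝ X] [CompleteSpace X]
    (A : Set X) (hA : IsCompact A) (hconv : Convex ℝ A) (hsym : A = -A) (h0 : (0 : X) ∈ A)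
    (ε : ℝ) (f₁ f₂ : X) (hf₁ : f₁ ∈ A) (hf₂ : f₂ ∈ A)
    (hcover : A ⊆ Metric.closedBall f₁ ε ∪ Metric.closedBall f₂ ε) :
    ∀ f ∈ A, ‖f‖ ≤ 4 * ε := by
  have hmid : (1/2 : ℝ) • f₁ + (1/2 : ℝ) • f₂ ∈ A :=
    hconv hf₁ hf₂ (by norm_num) (by norm_num) (by norm_num)
  have hd : ‖f₁ - f₂‖ ≤ 2 * ε := by
    rcases hcover hmid with h | h <;>
      rw [Metric.mem_closedBall, dist_eq_norm] at h
    · have e : (1/2:ℝ) • f₁ + (1/2:ℝ) • f₂ - f₁ = (1/2:ℝ) • (f₂ - f₁) := by module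
      rw [e, norm_smul] at h
      rw [norm_sub_rev]
      simp at h
      linarith
    · have e : (1/2:ℝ) • f₁ + (1/2:ℝ) • f₂ - f₂ = (1/2:ℝ) • (f₁ - f₂) := by module
      rw [e, norm_smul] at h
      simp at h
      linarith
  have hε : 0 ≤ ε := by
    rcases hcover hf₁ with h | h <;> rw [Metric.mem_closedBall] at h <;>
      exact le_trans dist_nonneg h
  have h1 : ‖f₁‖ ≤ 3 * ε ∧ ‖f₂‖ ≤ 3 * ε := by
    rcases hcover h0 with h | h <;> rw [Metric.mem_closedBall, dist_eq_norm, zero_sub, norm_neg] at h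
    · constructor
      · linarith
      · have := norm_sub_norm_le f₁ f₂
        have h2 : ‖f₂‖ ≤ ‖f₂ - f₁‖ + ‖f₁‖ := by
          simpa using norm_add_le (f₂ - f₁) f₁
        rw [norm_sub_rev] at h2
        linarith
    · constructor
      · have h2 : ‖f₁‖ ≤ ‖f₁ - f₂‖ + ‖f₂‖ := by
          simpa using norm_add_le (f₁ - f₂) f₂
        linarith
      · linarith
  intro f hf
  rcases hcover hf with h | h <;> rw [Metric.mem_closedBall, dist_eq_norm] at h
  · have h2 : ‖f‖ ≤ ‖f - f₁‖ + ‖f₁‖ := by simpa using norm_add_le (f - f₁) f₁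
    linarith [h1.1]
  · have h2 : ‖f‖ ≤ ‖f - f₂‖ + ‖f₂‖ := by simpa using norm_add_le (f - f₂) f₂
    linarith [h1.2]
end

section
/- Let 1 ≤ q < ∞ and let X_N be an N-dimensional subspace of L_q(Ω) consisting of continuous functions satisfying ε_k(X_N^q, L_∞) ≤ B·(N/k)^{1/q} for all 1 ≤ k ≤ N, where B ≥ 1. Then for all k > N one has ε_k(X_N^q, L_∞) ≤ 6·B·2^{−k/N}. -/
open MeasureTheory

noncomputable def supDist {Ω E : Type*} [NormedAddCommGroup E] (f g : Ω → E) : ℝ :=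
  ⨆ x, ‖f x - g x‖

/-- Covering number: the minimal number of balls of radius `ε` (w.r.t. the distance `dst`)
with centers in `A` needed to cover `A`. -/
noncomputable def coveringNum {α : Type*} (dst : α → α → ℝ) (ε : ℝ) (A : Set α) : ℕ :=
  sInf {n : ℕ | ∃ T : Finset α, ↑T ⊆ A ∧ T.card = n ∧ ∀ f ∈ A, ∃ g ∈ T, dst f g ≤ ε}

/-- The ε-entropy `H_ε(A) = log₂ N_ε(A)`. -/
noncomputable def metricEntropy {α : Type*} (dst : α → α → ℝ) (ε : ℝ) (A : Set α) : ℝ :=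
  Real.logb 2 (coveringNum dst ε A)

/-- The entropy numbers `ε_k(A) = inf {ε > 0 : H_ε(A) ≤ k}`. -/
noncomputable def entropyNum {α : Type*} (dst : α → α → ℝ) (k : ℕ) (A : Set α) : ℝ :=
  sInf {ε : ℝ | 0 < ε ∧ metricEntropy dst ε A ≤ k}
/-- The `L_q` norm `(∫_Ω ‖f‖^q dμ)^{1/q}`. -/
noncomputable def LqNorm {Ω : Type*} [MeasurableSpace Ω] {E : Type*} [NormedAddCommGroup E]
    (μ : MeasureTheory.Measure Ω) (q : ℝ) (f : Ω → E) : ℝ :=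
  (∫ x, ‖f x‖ ^ q ∂μ) ^ (1 / q)
/-- `X_N^q`, the `L_q` unit ball of the subspace `V`. -/
noncomputable def unitBallLq {Ω : Type*} [MeasurableSpace Ω] (μ : MeasureTheory.Measure Ω)
    (q : ℝ) (V : Submodule ℝ (Ω → ℝ)) : Set (Ω → ℝ) :=
  {f | f ∈ V ∧ LqNorm μ q f ≤ 1}

/-!
Take an `ε`-net of `X_N^q` with `2^N` points and `ε` close to `ε_N ≤ B`. Since `X_N` is
`N`-dimensional, a volume comparison shows that the part of `X_N^q` in each ball of radius `ε` has a
`θε`-net with `((2 + θ)/θ)^N` points. For `θ = 6 · 2^{-k/N}` the refined net has at most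
`(2 · 2^{k/N}/3 + 2)^N ≤ 2^k` points as soon as `2^{k/N} ≥ 6`; for smaller `k` the bound follows
from `ε_k ≤ ε_N`. If `X_N^q` is not totally bounded, its entropy numbers vanish; it contains the
uniform unit ball of `X_N`, so by Riesz's theorem it cannot be totally bounded when `X_N` is
infinite-dimensional (where `finrank` is `0`).
-/

open Metric Set

def IsNet {α : Type*} (dst : α → α → ℝ) (ε : ℝ) (A : Set α) (T : Finset α) : Prop :=
  ↑T ⊆ A ∧ ∀ f ∈ A, ∃ g ∈ T, dst f g ≤ ε

section Entropy

variable {α : Type*} {dst : α → α → ℝ} {ε : ℝ} {A : Set α} {T : Finset α}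

theorem IsNet.mono_radius (hT : IsNet dst ε A T) {ε' : ℝ} (hε : ε ≤ ε') : IsNet dst ε' A T :=
  ⟨hT.1, fun f hf => (hT.2 f hf).imp fun _ hg => ⟨hg.1, hg.2.trans hε⟩⟩

theorem coveringNum_le_card (hT : IsNet dst ε A T) : coveringNum dst ε A ≤ T.card :=
  Nat.sInf_le ⟨T, hT.1, rfl, hT.2⟩

theorem exists_isNet_card_eq_coveringNum (h : ∃ T, IsNet dst ε A T) :
    ∃ T, IsNet dst ε A T ∧ T.card = coveringNum dst ε A := by
  obtain ⟨T, hT⟩ := h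
  have hne : {n | ∃ T : Finset α, ↑T ⊆ A ∧ T.card = n ∧ ∀ f ∈ A, ∃ g ∈ T, dst f g ≤ ε}.Nonempty :=
    ⟨T.card, T, hT.1, rfl, hT.2⟩
  obtain ⟨T', hT'A, hcard, hT'⟩ := Nat.sInf_mem hne
  exact ⟨T', ⟨hT'A, hT'⟩, hcard⟩

theorem coveringNum_eq_zero (h : ∀ T, ¬IsNet dst ε A T) : coveringNum dst ε A = 0 := by
  refine Nat.sInf_eq_zero.2 (Or.inr (eq_empty_of_forall_notMem ?_))
  rintro n ⟨T, hTA, -, hT⟩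
  exact h T ⟨hTA, hT⟩

theorem metricEntropy_le_iff {k : ℕ} :
    metricEntropy dst ε A ≤ k ↔ (coveringNum dst ε A : ℝ) ≤ 2 ^ k := by
  rcases (coveringNum dst ε A).eq_zero_or_pos with h | h
  · simp [metricEntropy, h]
  · rw [metricEntropy, Real.logb_le_iff_le_rpow one_lt_two (by exact_mod_cast h),
      Real.rpow_natCast]

theorem entropyNum_nonneg (k : ℕ) : 0 ≤ entropyNum dst k A :=
  Real.sInf_nonneg fun _ h => h.1.le

theorem entropyNum_le {k : ℕ} (hε : 0 < ε) (h : metricEntropy dst ε A ≤ k) :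
    entropyNum dst k A ≤ ε :=
  csInf_le ⟨0, fun _ h => h.1.le⟩ ⟨hε, h⟩

theorem entropyNum_le_of_isNet {k : ℕ} (hε : 0 < ε) (hT : IsNet dst ε A T)
    (hcard : (T.card : ℝ) ≤ 2 ^ k) : entropyNum dst k A ≤ ε :=
  entropyNum_le hε (metricEntropy_le_iff.2 ((Nat.cast_le.2 (coveringNum_le_card hT)).trans hcard))

-- `coveringNum` is `sInf ∅ = 0` at the radii where no finite net exists.
theorem entropyNum_le_zero_of_forall_not_isNet {ε₀ : ℝ} (hε₀ : 0 < ε₀)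
    (h : ∀ T, ¬IsNet dst ε₀ A T) (k : ℕ) : entropyNum dst k A ≤ 0 := by
  refine le_of_forall_pos_le_add fun η hη => ?_
  have hnet : coveringNum dst (min η ε₀) A = 0 :=
    coveringNum_eq_zero fun T hT => h T (hT.mono_radius (min_le_right η ε₀))
  have hent : metricEntropy dst (min η ε₀) A ≤ k := by
    rw [metricEntropy_le_iff, hnet, Nat.cast_zero]
    positivity
  linarith [entropyNum_le (lt_min hη hε₀) hent, min_le_left η ε₀]

theorem entropyNum_le_entropyNum {j k : ℕ} (hjk : j ≤ k)
    (hne : ∃ ε, 0 < ε ∧ metricEntropy dst ε A ≤ j) :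
    entropyNum dst k A ≤ entropyNum dst j A :=
  csInf_le_csInf ⟨0, fun _ h => h.1.le⟩ hne fun _ h => ⟨h.1, h.2.trans (by exact_mod_cast hjk)⟩

theorem coveringNum_image {β : Type*} {dst' : β → β → ℝ} {Φ : α → β}
    (hΦ : Function.Injective Φ) (hd : ∀ x y, dst' (Φ x) (Φ y) = dst x y) (ε : ℝ) (A : Set α) :
    coveringNum dst' ε (Φ '' A) = coveringNum dst ε A := by
  classical
  unfold coveringNum
  congr 1
  ext n
  constructor
  · rintro ⟨T', hT'A, rfl, hT'⟩
    obtain ⟨T, hTA, rfl⟩ := Finset.subset_set_image_iff.1 hT'A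
    refine ⟨T, hTA, (Finset.card_image_of_injective T hΦ).symm, fun f hf => ?_⟩
    obtain ⟨_, hg, hfg⟩ := hT' (Φ f) (mem_image_of_mem Φ hf)
    obtain ⟨g, hgT, rfl⟩ := Finset.mem_image.1 hg
    exact ⟨g, hgT, hd f g ▸ hfg⟩
  · rintro ⟨T, hTA, rfl, hT⟩
    refine ⟨T.image Φ, by simpa using image_mono hTA, Finset.card_image_of_injective T hΦ, ?_⟩
    rintro _ ⟨f, hf, rfl⟩
    obtain ⟨g, hgT, hfg⟩ := hT f hf
    exact ⟨Φ g, Finset.mem_image_of_mem Φ hgT, (hd f g).symm ▸ hfg⟩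

theorem entropyNum_image {β : Type*} {dst' : β → β → ℝ} {Φ : α → β}
    (hΦ : Function.Injective Φ) (hd : ∀ x y, dst' (Φ x) (Φ y) = dst x y) (k : ℕ) (A : Set α) :
    entropyNum dst' k (Φ '' A) = entropyNum dst k A := by
  simp only [entropyNum, metricEntropy, coveringNum_image hΦ hd]

end Entropy

section PseudoMetric

variable {E : Type*} [PseudoMetricSpace E] {A : Set E}

theorem isNet_singleton {a : E} {R : ℝ} (ha : a ∈ A) (hA : A ⊆ closedBall a R) :
    IsNet dist R A {a} :=
  ⟨by simpa using ha, fun _ hf => ⟨a, Finset.mem_singleton_self a, hA hf⟩⟩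

theorem isNet_empty (ε : ℝ) : IsNet (dist : E → E → ℝ) ε ∅ ∅ :=
  ⟨by simp, by simp⟩

theorem TotallyBounded.exists_isNet (hA : TotallyBounded A) {ε : ℝ} (hε : 0 < ε) :
    ∃ T, IsNet dist ε A T := by
  obtain ⟨t, htA, ht, hcov⟩ := totallyBounded_iff_subset.1 hA _ (dist_mem_uniformity hε)
  refine ⟨ht.toFinset, by simpa using htA, fun f hf => ?_⟩
  obtain ⟨g, hg, hfg⟩ := mem_iUnion₂.1 (hcov hf)
  exact ⟨g, ht.mem_toFinset.2 hg, le_of_lt hfg⟩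

theorem totallyBounded_of_forall_isNet (h : ∀ ε > 0, ∃ T, IsNet dist ε A T) :
    TotallyBounded A := by
  refine Metric.totallyBounded_iff.2 fun ε hε => ?_
  obtain ⟨T, -, hT⟩ := h (ε / 2) (half_pos hε)
  refine ⟨T, T.finite_toSet, fun f hf => ?_⟩
  obtain ⟨g, hg, hfg⟩ := hT f hf
  exact mem_iUnion₂.2 ⟨g, hg, mem_ball.2 (by linarith)⟩

theorem entropyNum_le_zero_of_not_totallyBounded (hA : ¬TotallyBounded A) (k : ℕ) :
    entropyNum dist k A ≤ 0 := by
  obtain ⟨ε, hε, h⟩ : ∃ ε > 0, ∀ T, ¬IsNet dist ε A T := by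
    by_contra! h
    exact hA (totallyBounded_of_forall_isNet h)
  exact entropyNum_le_zero_of_forall_not_isNet hε h k

theorem entropyNum_le_zero_of_subsingleton (hA : A.Subsingleton) (k : ℕ) :
    entropyNum dist k A ≤ 0 := by
  refine le_of_forall_pos_le_add fun ε hε => ?_
  rw [zero_add]
  rcases hA.eq_empty_or_singleton with rfl | ⟨a, rfl⟩
  · exact entropyNum_le_of_isNet hε (isNet_empty ε) (by simp)
  · exact entropyNum_le_of_isNet hε (isNet_singleton rfl (by simpa using hε.le))
      (by simp [one_le_pow₀])

theorem TotallyBounded.exists_metricEntropy_le (hA : TotallyBounded A) (k : ℕ) :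
    ∃ ε, 0 < ε ∧ metricEntropy dist ε A ≤ k := by
  obtain ⟨R, hR, T, hT, hcard⟩ : ∃ R > 0, ∃ T, IsNet dist R A T ∧ T.card ≤ 1 := by
    rcases A.eq_empty_or_nonempty with rfl | ⟨a, ha⟩
    · exact ⟨1, one_pos, ∅, isNet_empty 1, by simp⟩
    obtain ⟨R, hR, hAR⟩ := hA.isBounded.subset_closedBall_lt 0 a
    exact ⟨R, hR, {a}, isNet_singleton ha hAR, by simp⟩
  refine ⟨R, hR, metricEntropy_le_iff.2 ?_⟩
  calc (coveringNum dist R A : ℝ) ≤ 1 := by exact_mod_cast (coveringNum_le_card hT).trans hcard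
    _ ≤ 2 ^ k := one_le_pow₀ one_le_two

theorem TotallyBounded.exists_isNet_of_entropyNum_lt (hA : TotallyBounded A) {k : ℕ} {r : ℝ}
    (h : entropyNum dist k A < r) :
    ∃ ε, 0 < ε ∧ ε < r ∧ ∃ T, IsNet dist ε A T ∧ (T.card : ℝ) ≤ 2 ^ k := by
  obtain ⟨ε, ⟨hε, hent⟩, hεr⟩ := exists_lt_of_csInf_lt (hA.exists_metricEntropy_le k) h
  obtain ⟨T, hT, hcard⟩ := exists_isNet_card_eq_coveringNum (hA.exists_isNet hε)
  exact ⟨ε, hε, hεr, T, hT, hcard ▸ metricEntropy_le_iff.1 hent⟩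

theorem TotallyBounded.entropyNum_le_mul (hA : TotallyBounded A) {j k : ℕ} {θ : ℝ} (hθ : 0 < θ)
    (hrefine : ∀ ε > 0, ∀ T, IsNet dist ε A T → (T.card : ℝ) ≤ 2 ^ j →
      ∃ T', IsNet dist (θ * ε) A T' ∧ (T'.card : ℝ) ≤ 2 ^ k) :
    entropyNum dist k A ≤ θ * entropyNum dist j A := by
  refine le_of_forall_pos_lt_add fun η hη => ?_
  obtain ⟨ε, hε, hεlt, T, hT, hcard⟩ :=
    hA.exists_isNet_of_entropyNum_lt (lt_add_of_pos_right (entropyNum dist j A) (div_pos hη hθ))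
  obtain ⟨T', hT', hcard'⟩ := hrefine ε hε T hT hcard
  calc entropyNum dist k A ≤ θ * ε := entropyNum_le_of_isNet (mul_pos hθ hε) hT' hcard'
    _ < θ * (entropyNum dist j A + η / θ) := by gcongr
    _ = θ * entropyNum dist j A + η := by field_simp

theorem exists_isNet_card_le_of_separated {δ β : ℝ} (hδ : 0 ≤ δ)
    (hsep : ∀ s : Finset E, ↑s ⊆ A → (s : Set E).Pairwise (δ < dist · ·) → (s.card : ℝ) ≤ β) :
    ∃ T, IsNet dist δ A T ∧ (T.card : ℝ) ≤ β := by
  classical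
  set C := {n | ∃ s : Finset E, ↑s ⊆ A ∧ (s : Set E).Pairwise (δ < dist · ·) ∧ s.card = n}
  have hC : BddAbove C := ⟨⌊β⌋₊, by
    rintro _ ⟨s, hsA, hs, rfl⟩
    exact Nat.le_floor (hsep s hsA hs)⟩
  obtain ⟨s, hsA, hs, hcard⟩ := Nat.sSup_mem (show C.Nonempty from ⟨0, ∅, by simp, by simp, rfl⟩) hC
  refine ⟨s, ⟨hsA, fun f hf => ?_⟩, hsep s hsA hs⟩
  by_contra! hfar
  have hfs : f ∉ s := fun hfs => by simpa [hδ.not_gt] using hfar f hfs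
  have hins : sSup C + 1 ∈ C := by
    refine ⟨insert f s, ?_, ?_, by rw [Finset.card_insert_of_notMem hfs, hcard]⟩
    · simpa [insert_subset_iff] using ⟨hf, hsA⟩
    · rw [Finset.coe_insert]
      exact hs.insert fun g hg _ => ⟨hfar g hg, dist_comm f g ▸ hfar g hg⟩
  exact (le_csSup hC hins).not_gt (Nat.lt_succ_self _)

end PseudoMetric

section FiniteDimensional

variable {E : Type*} [NormedAddCommGroup E] [NormedSpace ℝ E] [FiniteDimensional ℝ E]

open Module
open scoped ENNReal

theorem card_le_of_separated_subset_closedBall {s : Finset E} {c : E} {R δ : ℝ} (hR : 0 ≤ R)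
    (hδ : 0 < δ) (hs : ↑s ⊆ closedBall c R) (hsep : (s : Set E).Pairwise (δ < dist · ·)) :
    (s.card : ℝ) ≤ ((2 * R + δ) / δ) ^ finrank ℝ E := by
  borelize E
  set μ : Measure E := Measure.addHaar
  set n := finrank ℝ E
  have hdisj : (s : Set E).PairwiseDisjoint fun x => ball x (δ / 2) :=
    fun x hx y hy hxy => ball_disjoint_ball (by linarith [hsep hx hy hxy])
  have hsub : (⋃ x ∈ s, ball x (δ / 2)) ⊆ ball c (R + δ / 2) :=
    iUnion₂_subset fun x hx => ball_subset_ball' (by linarith [mem_closedBall.1 (hs hx)])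
  have hvol : (s.card : ℝ≥0∞) * ENNReal.ofReal ((δ / 2) ^ n) * μ (ball 0 1) ≤
      ENNReal.ofReal ((R + δ / 2) ^ n) * μ (ball 0 1) :=
    calc (s.card : ℝ≥0∞) * ENNReal.ofReal ((δ / 2) ^ n) * μ (ball 0 1)
        = μ (⋃ x ∈ s, ball x (δ / 2)) := by
          rw [measure_biUnion_finset hdisj fun _ _ => measurableSet_ball]
          simp only [μ.addHaar_ball_of_pos _ (half_pos hδ), Finset.sum_const, nsmul_eq_mul,
            mul_assoc, n]
      _ ≤ μ (ball c (R + δ / 2)) := measure_mono hsub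
      _ = ENNReal.ofReal ((R + δ / 2) ^ n) * μ (ball 0 1) := μ.addHaar_ball_of_pos _ (by positivity)
  have hreal : (s.card : ℝ) * (δ / 2) ^ n ≤ (R + δ / 2) ^ n := by
    have h := (ENNReal.mul_le_mul_iff_left (measure_ball_pos μ _ one_pos).ne'
      measure_ball_lt_top.ne).1 hvol
    rw [← ENNReal.ofReal_natCast, ← ENNReal.ofReal_mul (by positivity)] at h
    exact (ENNReal.ofReal_le_ofReal_iff (by positivity)).1 h
  calc (s.card : ℝ) ≤ (R + δ / 2) ^ n / (δ / 2) ^ n := by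
        rw [le_div_iff₀ (by positivity)]; exact hreal
    _ = ((2 * R + δ) / δ) ^ n := by rw [← div_pow]; congr 1; field_simp

theorem exists_isNet_inter_closedBall (A : Set E) (c : E) {R δ : ℝ} (hR : 0 ≤ R) (hδ : 0 < δ) :
    ∃ T, IsNet dist δ (A ∩ closedBall c R) T ∧
      (T.card : ℝ) ≤ ((2 * R + δ) / δ) ^ finrank ℝ E :=
  exists_isNet_card_le_of_separated hδ.le fun _ hs hsep =>
    card_le_of_separated_subset_closedBall hR hδ (hs.trans inter_subset_right) hsep

theorem IsNet.exists_refine {A : Set E} {T : Finset E} {ε θ : ℝ} (hT : IsNet dist ε A T)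
    (hε : 0 < ε) (hθ : 0 < θ) :
    ∃ T', IsNet dist (θ * ε) A T' ∧ (T'.card : ℝ) ≤ T.card * ((2 + θ) / θ) ^ finrank ℝ E := by
  classical
  choose u hu hcard using fun c : E => exists_isNet_inter_closedBall A c hε.le (mul_pos hθ hε)
  refine ⟨T.biUnion u, ⟨?_, fun f hf => ?_⟩, ?_⟩
  · rw [Finset.coe_biUnion]
    exact iUnion₂_subset fun c _ => (hu c).1.trans inter_subset_left
  · obtain ⟨c, hc, hfc⟩ := hT.2 f hf
    obtain ⟨g, hg, hfg⟩ := (hu c).2 f ⟨hf, mem_closedBall.2 hfc⟩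
    exact ⟨g, Finset.mem_biUnion.2 ⟨c, hc, hg⟩, hfg⟩
  · have hratio : (2 * ε + θ * ε) / (θ * ε) = (2 + θ) / θ := by field_simp
    calc ((T.biUnion u).card : ℝ) ≤ ∑ c ∈ T, ((u c).card : ℝ) := by
          exact_mod_cast Finset.card_biUnion_le
      _ ≤ ∑ _c ∈ T, ((2 + θ) / θ) ^ finrank ℝ E :=
          Finset.sum_le_sum fun c _ => hratio ▸ hcard c
      _ = T.card * ((2 + θ) / θ) ^ finrank ℝ E := by rw [Finset.sum_const, nsmul_eq_mul]

theorem TotallyBounded.entropyNum_le_of_finrank_le {A : Set E} (hA : TotallyBounded A) {k : ℕ}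
    (hk : finrank ℝ E ≤ k) :
    entropyNum dist k A ≤ 6 * 2 ^ (-(k : ℝ) / finrank ℝ E) * entropyNum dist (finrank ℝ E) A := by
  set N := finrank ℝ E
  set t : ℝ := 2 ^ ((k : ℝ) / N) with ht
  have ht0 : 0 < t := by positivity
  rw [neg_div, Real.rpow_neg zero_le_two, ← ht]
  rcases lt_or_ge t 6 with ht6 | ht6
  · calc entropyNum dist k A ≤ entropyNum dist N A :=
          entropyNum_le_entropyNum hk (hA.exists_metricEntropy_le N)
      _ ≤ 6 * t⁻¹ * entropyNum dist N A := by
          refine le_mul_of_one_le_left (entropyNum_nonneg N) ?_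
          rw [← div_eq_mul_inv, one_le_div ht0]
          exact ht6.le
  · have hN : (N : ℝ) ≠ 0 := by
      rintro hN
      norm_num [ht, hN] at ht6
    have htN : t ^ N = 2 ^ k := by
      rw [ht, ← Real.rpow_natCast, ← Real.rpow_mul zero_le_two, div_mul_cancel₀ _ hN,
        Real.rpow_natCast]
    have hratio : (2 + 6 * t⁻¹) / (6 * t⁻¹) = t / 3 + 1 := by field_simp; ring
    refine hA.entropyNum_le_mul (by positivity) fun ε hε T hT hcard => ?_
    obtain ⟨T', hT', hcard'⟩ := hT.exists_refine hε (θ := 6 * t⁻¹) (by positivity)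
    refine ⟨T', hT', hcard'.trans ?_⟩
    calc (T.card : ℝ) * ((2 + 6 * t⁻¹) / (6 * t⁻¹)) ^ N ≤ 2 ^ N * (t / 3 + 1) ^ N := by
          rw [hratio]; gcongr
      _ = (2 * t / 3 + 2) ^ N := by rw [← mul_pow]; ring_nf
      _ ≤ t ^ N := by gcongr; linarith
      _ = 2 ^ k := htN

end FiniteDimensional

theorem LqNorm_le_one_of_norm_le_one {Ω E : Type*} [MeasurableSpace Ω] [NormedAddCommGroup E]
    {μ : Measure Ω} [IsProbabilityMeasure μ] {q : ℝ} (hq : 0 ≤ q) {f : Ω → E}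
    (hf : ∀ x, ‖f x‖ ≤ 1) : LqNorm μ q f ≤ 1 := by
  have hI : ∫ x, ‖f x‖ ^ q ∂μ ≤ 1 :=
    calc ∫ x, ‖f x‖ ^ q ∂μ ≤ ∫ _, (1 : ℝ) ∂μ :=
          integral_mono_of_nonneg (ae_of_all _ fun x => by positivity) (integrable_const 1)
            (ae_of_all _ fun x => Real.rpow_le_one (norm_nonneg _) (hf x) hq)
      _ = 1 := by simp
  exact Real.rpow_le_one (integral_nonneg fun x => by positivity) hI (by positivity)

theorem ContinuousMap.supDist_coe {X E : Type*} [TopologicalSpace X] [CompactSpace X]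
    [NormedAddCommGroup E] (f g : C(X, E)) : supDist ⇑f ⇑g = dist f g := by
  rw [dist_eq_norm, ContinuousMap.norm_eq_iSup_norm]
  rfl

section ContinuousPart

variable {X : Type*} [TopologicalSpace X] {V : Submodule ℝ (X → ℝ)}

def continuousPart (V : Submodule ℝ (X → ℝ)) : Submodule ℝ C(X, ℝ) :=
  V.comap (ContinuousMap.coeFnLinearMap ℝ)

theorem finrank_continuousPart (hV : ∀ f ∈ V, Continuous f) :
    Module.finrank ℝ (continuousPart V) = Module.finrank ℝ V := by
  refine (LinearEquiv.ofBijective ((ContinuousMap.coeFnLinearMap ℝ).restrict fun _ hw => hw)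
    ⟨fun v w h => ?_, fun f => ⟨⟨⟨f, hV f f.2⟩, f.2⟩, rfl⟩⟩).finrank_eq
  exact Subtype.ext (DFunLike.coe_injective (congrArg Subtype.val h))

theorem entropyNum_supDist_eq [CompactSpace X] (hV : ∀ f ∈ V, Continuous f)
    {S : Set (X → ℝ)} (hS : S ⊆ V) (k : ℕ) :
    entropyNum supDist k S = entropyNum dist k {w : continuousPart V | ⇑(w : C(X, ℝ)) ∈ S} := by
  have hrange : (fun w : continuousPart V => ⇑(w : C(X, ℝ))) '' {w | ⇑(w : C(X, ℝ)) ∈ S} = S :=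
    image_preimage_eq_of_subset fun f hf => ⟨⟨⟨f, hV f (hS hf)⟩, hS hf⟩, rfl⟩
  nth_rewrite 1 [← hrange]
  exact entropyNum_image (dst := dist) (DFunLike.coe_injective.comp Subtype.val_injective)
    (fun v w => ContinuousMap.supDist_coe _ _) k _

theorem closedBall_subset_unitBallLq [CompactSpace X] [MeasurableSpace X] (μ : Measure X)
    [IsProbabilityMeasure μ] {q : ℝ} (hq : 0 ≤ q) :
    closedBall (0 : continuousPart V) 1 ⊆ {w | ⇑(w : C(X, ℝ)) ∈ unitBallLq μ q V} :=
  fun w hw => ⟨w.2, LqNorm_le_one_of_norm_le_one hq fun x =>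
    ((w : C(X, ℝ)).norm_coe_le_norm x).trans (mem_closedBall_zero_iff.1 hw)⟩

end ContinuousPart

/-- inequality (2.3): under the entropy assumption
`ε_k(X_N^q, L_∞) ≤ B (N/k)^{1/q}` for `1 ≤ k ≤ N`, one has
`ε_k(X_N^q, L_∞) ≤ 6 B 2^{-k/N}` for all `k > N`. -/
theorem statement5 (q : ℝ) (hq : 1 ≤ q) (d N : ℕ) (Ω : Set (Fin d → ℝ)) (hΩ : IsCompact Ω)
    (μ : Measure Ω) [IsProbabilityMeasure μ]
    (V : Submodule ℝ (Ω → ℝ)) (hdim : Module.finrank ℝ V = N)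
    (hcont : ∀ f ∈ V, Continuous f)
    (B : ℝ) (hB : 1 ≤ B)
    (hent : ∀ k : ℕ, 1 ≤ k → k ≤ N →
      entropyNum supDist k (unitBallLq μ q V) ≤ B * ((N : ℝ) / k) ^ (1 / q)) :
    ∀ k : ℕ, N < k →
      entropyNum supDist k (unitBallLq μ q V) ≤ 6 * B * 2 ^ (-(k : ℝ) / N) := by
  intro k hk
  have : CompactSpace Ω := isCompact_iff_compactSpace.mp hΩ
  set A := {w : continuousPart V | ⇑(w : C(Ω, ℝ)) ∈ unitBallLq μ q V}
  have hentA (j : ℕ) : entropyNum supDist j (unitBallLq μ q V) = entropyNum dist j A :=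
    entropyNum_supDist_eq hcont (fun _ hf => hf.1) j
  have h6B : 0 ≤ 6 * B * 2 ^ (-(k : ℝ) / N) := mul_nonneg (by linarith) (by positivity)
  rw [hentA]
  by_cases hTB : TotallyBounded A
  swap
  · exact (entropyNum_le_zero_of_not_totallyBounded hTB k).trans h6B
  have : FiniteDimensional ℝ (continuousPart V) :=
    .of_totallyBounded_nhds_zero ℝ (closedBall_mem_nhds 0 one_pos)
      (hTB.subset (closedBall_subset_unitBallLq μ (by linarith)))
  have hN : Module.finrank ℝ (continuousPart V) = N := (finrank_continuousPart hcont).trans hdim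
  rcases Nat.eq_zero_or_pos N with rfl | hN0
  · have := Module.finrank_zero_iff.1 hN
    exact (entropyNum_le_zero_of_subsingleton subsingleton_of_subsingleton k).trans h6B
  have hentN : entropyNum dist N A ≤ B := by
    simpa [← hentA, div_self ((Nat.cast_ne_zero (R := ℝ)).2 hN0.ne')] using hent N hN0 le_rfl
  calc entropyNum dist k A ≤ 6 * 2 ^ (-(k : ℝ) / N) * entropyNum dist N A :=
        hN ▸ hTB.entropyNum_le_of_finrank_le (hN ▸ hk.le)
    _ ≤ 6 * 2 ^ (-(k : ℝ) / N) * B := by gcongr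
    _ = 6 * B * 2 ^ (-(k : ℝ) / N) := by ring
end

section
/- In the construction of the sandwiching map: let a ∈ (0,1/2], j₀ ∈ ℤ, and for each j ∈ ℤ, j ≥ j₀, let A_j(f) be a function with ‖f − A_j(f)‖_∞ ≤ a(1+a)^j. Define U_j(f) := {x : |A_j(f)(x)| ≥ (1+a)^{j−1}}, D_j(f) := U_j(f) ∖ ∪_{k>j} U_k(f) for j > j₀, D_{j₀}(f) := Ω ∖ ∪_{k>j₀} U_k(f), and h(f,x) := Σ_{j>j₀} (1+a)^j·χ_{D_j(f)}(x). Then for all x ∈ Ω ∖ D_{j₀}(f) one has C₁(a)·h(f,x) ≤ |f(x)| ≤ C₂(a)·h(f,x), where C₁(a) := (1 − a(1+a))/(1+a) and C₂(a) := 1 + a(1+a); moreover, for all x ∈ D_{j₀}(f) one has |f(x)| ≤ (1+a)^{j₀}·C₂(a). -/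
open Classical in

/-- properties (2.9) and (2.11) of the sandwiching construction: with
`a ∈ (0, 1/2]`, `j₀ ∈ ℤ`, approximants `A_j` satisfying `‖f - A_j‖_∞ ≤ a(1+a)^j` for
`j ≥ j₀`, `U_j = {x : |A_j(x)| ≥ (1+a)^{j-1}}`, `D_j = U_j ∖ ∪_{k>j} U_k` for `j > j₀`,
`D_{j₀} = Ω ∖ ∪_{k>j₀} U_k`, and `h(x) = ∑_{j>j₀} (1+a)^j χ_{D_j}(x)`, one has
`C₁(a) h(x) ≤ |f(x)| ≤ C₂(a) h(x)` for `x ∈ Ω ∖ D_{j₀}` and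
`|f(x)| ≤ (1+a)^{j₀} C₂(a)` for `x ∈ D_{j₀}`, where
`C₁(a) = (1 - a(1+a))/(1+a)` and `C₂(a) = 1 + a(1+a)`. -/
theorem statement17 {d : ℕ} (Ω : Set (Fin d → ℝ)) (hΩ : IsCompact Ω)
    (a : ℝ) (ha : a ∈ Set.Ioc (0 : ℝ) (1 / 2)) (j₀ : ℤ)
    (f : Ω → ℂ) (hf : Continuous f)
    (A : ℤ → Ω → ℂ) (hA : ∀ j, Continuous (A j))
    (happrox : ∀ j : ℤ, j₀ ≤ j → ∀ x, ‖f x - A j x‖ ≤ a * (1 + a) ^ j)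
    (U : ℤ → Set Ω) (hU : ∀ j, U j = {x | (1 + a) ^ (j - 1) ≤ ‖A j x‖})
    (hfin : ∃ J : ℤ, ∀ j : ℤ, J < j → U j = ∅)
    (D : ℤ → Set Ω)
    (hD : ∀ j : ℤ, j₀ < j → D j = U j \ ⋃ k ∈ {k : ℤ | j < k}, U k)
    (hD0 : D j₀ = Set.univ \ ⋃ k ∈ {k : ℤ | j₀ < k}, U k)
    (h : Ω → ℝ)
    (hh : ∀ x, h x = ∑' j : ℤ, if j₀ < j ∧ x ∈ D j then (1 + a) ^ j else 0) :
    (∀ x, x ∉ D j₀ →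
      (1 - a * (1 + a)) / (1 + a) * h x ≤ ‖f x‖ ∧
        ‖f x‖ ≤ (1 + a * (1 + a)) * h x) ∧
    (∀ x ∈ D j₀, ‖f x‖ ≤ (1 + a) ^ j₀ * (1 + a * (1 + a))) := by

  obtain ⟨ha0, ha2⟩ := ha
  have h1a : (0:ℝ) < 1 + a := by linarith
  obtain ⟨J, hJ⟩ := hfin
  constructor
  · intro x hx
    have hxU : x ∈ ⋃ k ∈ {k : ℤ | j₀ < k}, U k := by
      by_contra hc
      exact hx (by rw [hD0]; exact ⟨Set.mem_univ x, hc⟩)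
    have hne : ∃ j : ℤ, j₀ < j ∧ x ∈ U j := by
      simpa using hxU
    have hbdd : ∀ j : ℤ, (j₀ < j ∧ x ∈ U j) → j ≤ J := by
      rintro j ⟨_, hj⟩
      by_contra hc
      push_neg at hc
      rw [hJ j hc] at hj; exact hj
    obtain ⟨m, ⟨hm0, hmU⟩, hmax⟩ := Int.exists_greatest_of_bdd ⟨J, hbdd⟩ hne
    have hxD : x ∈ D m := by
      rw [hD m hm0]
      refine ⟨hmU, ?_⟩
      intro hc
      simp only [Set.mem_iUnion, Set.mem_setOf_eq] at hc
      obtain ⟨k, hk, hkU⟩ := hc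
      have := hmax k ⟨hm0.trans hk, hkU⟩
      omega
    have hhx : h x = (1 + a) ^ m := by
      rw [hh x, tsum_eq_single m]
      · simp [hm0, hxD]
      · intro j hj
        rw [if_neg]
        rintro ⟨hj0, hjD⟩
        rcases lt_trichotomy j m with hlt | heq | hgt
        · rw [hD j hj0] at hjD
          exact hjD.2 (Set.mem_biUnion hlt hmU)
        · exact hj heq
        · have hjU : x ∈ U j := by rw [hD j hj0] at hjD; exact hjD.1
          have := hmax j ⟨hm0.trans hgt, hjU⟩
          omega
    have hAm : (1 + a) ^ (m - 1) ≤ ‖A m x‖ := by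
      rw [hU m] at hmU; exact hmU
    have happ : ‖f x - A m x‖ ≤ a * (1 + a) ^ m := happrox m hm0.le x
    have hnotU : x ∉ U (m + 1) := by
      intro hc
      have := hmax (m + 1) ⟨by omega, hc⟩
      omega
    have hAm1 : ‖A (m + 1) x‖ < (1 + a) ^ m := by
      rw [hU (m + 1)] at hnotU
      simp only [Set.mem_setOf_eq, not_le, add_sub_cancel_right] at hnotU
      exact hnotU
    have happ1 : ‖f x - A (m + 1) x‖ ≤ a * (1 + a) ^ (m + 1) :=
      happrox (m + 1) (by omega) x
    have hpow : (1 + a) ^ (m - 1) * (1 + a) = (1 + a) ^ m := by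
      rw [← zpow_add_one₀ (ne_of_gt h1a)]; ring_nf
    have hpow1 : (1 + a) ^ (m + 1) = (1 + a) ^ m * (1 + a) :=
      zpow_add_one₀ (ne_of_gt h1a) m
    have habs := abs_norm_sub_norm_le (f x) (A m x)
    have habs1 := abs_norm_sub_norm_le (f x) (A (m + 1) x)
    rw [abs_le] at habs habs1
    rw [hhx]
    constructor
    · rw [div_mul_eq_mul_div, div_le_iff₀ h1a]
      nlinarith [habs.1, habs.2]
    · nlinarith [habs1.1, habs1.2]
  · intro x hxD
    rw [hD0] at hxD
    have hnotU : x ∉ U (j₀ + 1) := by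
      intro hc
      exact hxD.2 (Set.mem_biUnion (by simp) hc)
    have hA1 : ‖A (j₀ + 1) x‖ < (1 + a) ^ j₀ := by
      rw [hU (j₀ + 1)] at hnotU
      simp only [Set.mem_setOf_eq, not_le, add_sub_cancel_right] at hnotU
      exact hnotU
    have happ1 : ‖f x - A (j₀ + 1) x‖ ≤ a * (1 + a) ^ (j₀ + 1) :=
      happrox (j₀ + 1) (by omega) x
    have hpow1 : (1 + a) ^ (j₀ + 1) = (1 + a) ^ j₀ * (1 + a) :=
      zpow_add_one₀ (ne_of_gt h1a) j₀
    have habs1 := abs_norm_sub_norm_le (f x) (A (j₀ + 1) x)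
    rw [abs_le] at habs1
    nlinarith [habs1.1, habs1.2]
end
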